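/- Let A be a finite class of integer-valued functions on a probability space (Ω, μ), |A| ≥ 2, which is 6-separated in L_2(μ). Then A shatters at least |A|^{1/2} centers. -/

import Mathlib

open MeasureTheory

variable {Ω : Type*}

/-- `A` shatters the center `(σ, h)`. (For `σ = ∅` this is the trivial center,
shattered iff `A` is nonempty.) -/
def ShattersCenter (A : Finset (Ω → ℤ)) (σ : Finset Ω) (h : Ω → ℤ) : Prop :=
  A.Nonempty ∧ ∀ θ : Ω → Bool, ∃ f ∈ A, ∀ i ∈ σ,
    (θ i = true → f i > h i) ∧ (θ i = false → f i < h i)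

/-- The set of centers shattered by `A`, level functions being supported on `σ`. -/
def shatteredCenters (A : Finset (Ω → ℤ)) : Set (Finset Ω × (Ω → ℤ)) :=
  {p | (∀ i ∉ p.1, p.2 i = 0) ∧ ShattersCenter A p.1 p.2}

/-! Averaging the separation over `Ω` gives a point `ω₀` at which the values `f ω₀`, `f ∈ A`,
are spread out: their second moment about every integer exceeds `4 |A|`. Such a spread set of
integers has a balanced level `h₀`: if `a`, `l`, `b` functions lie below, at and above `h₀`, then
`a, b ≥ 1` and `l² ≤ 4ab`. (Otherwise the tails beyond a median decay like `4⁻ᵏ` and the second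
moment about the median is at most `4 |A|`.) Centers shattered by the functions above `h₀`, or by
those below, are shattered by `A`, and a center shattered by both extends by the point `ω₀` with
level `h₀`. So the number `s(A)` of shattered centers is at least the sum of those of the two halves,
and induction gives `s(A)² ≥ a + b + 2 √(ab) ≥ a + b + l = |A|`. -/

open Finset

lemma sq_eq_sum_range_ite_odd {m K : ℕ} (hm : m ≤ K) :
    (m : ℝ) ^ 2 = ∑ k ∈ range K, if k < m then (2 * k + 1 : ℝ) else 0 := by
  rw [← sum_filter, show {k ∈ range K | k < m} = range m by ext; simp; omega]
  induction m with
  | zero => simp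
  | succ m ih => rw [sum_range_succ, ← ih (by omega)]; push_cast; ring

lemma sum_odd_mul_le {K n : ℕ} {u : ℕ → ℕ} (hu : ∀ k, u k * 4 ^ k ≤ n) :
    ∑ k ∈ range K, (2 * k + 1 : ℝ) * u k ≤ 4 * n := by
  have hterm : ∀ k : ℕ, (2 * k + 1 : ℝ) * u k ≤ 2 * n * (1 / 2) ^ k := fun k => by
    have hodd : (2 * k + 1 : ℝ) ≤ 2 * 2 ^ k := by
      have := Nat.lt_two_pow_self (n := k)
      exact_mod_cast (by omega : 2 * k + 1 ≤ 2 * 2 ^ k)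
    have hu' : (u k : ℝ) * (2 ^ k * 2 ^ k) ≤ n := by
      rw [← mul_pow]; norm_num; exact_mod_cast hu k
    rw [div_pow, one_pow, mul_one_div, le_div_iff₀ (by positivity)]
    calc (2 * k + 1 : ℝ) * u k * 2 ^ k ≤ 2 * 2 ^ k * u k * 2 ^ k := by gcongr
      _ = 2 * (u k * (2 ^ k * 2 ^ k)) := by ring
      _ ≤ 2 * n := by gcongr
  calc ∑ k ∈ range K, (2 * k + 1 : ℝ) * u k ≤ ∑ k ∈ range K, 2 * n * (1 / 2 : ℝ) ^ k :=
        sum_le_sum fun k _ => hterm k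
    _ = 2 * n * ∑ k ∈ range K, (1 / 2 : ℝ) ^ k := by rw [mul_sum]
    _ ≤ 2 * n * 2 := by gcongr; exact sum_geometric_two_le K
    _ = 4 * n := by ring

section BalancedLevel

variable {α : Type*} (A : Finset α) (v : α → ℤ)

def IsBalancedLevel (h : ℤ) : Prop :=
  0 < #{f ∈ A | v f < h} ∧ 0 < #{f ∈ A | h < v f} ∧
    #{f ∈ A | v f = h} ^ 2 ≤ 4 * #{f ∈ A | v f < h} * #{f ∈ A | h < v f}

lemma isBalancedLevel_neg_iff (h : ℤ) :
    IsBalancedLevel A (-v) (-h) ↔ IsBalancedLevel A v h := by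
  have below : #{f ∈ A | (-v) f < -h} = #{f ∈ A | h < v f} := by
    congr 1; exact filter_congr fun f _ => by simp
  have above : #{f ∈ A | -h < (-v) f} = #{f ∈ A | v f < h} := by
    congr 1; exact filter_congr fun f _ => by simp
  have level : #{f ∈ A | (-v) f = -h} = #{f ∈ A | v f = h} := by
    congr 1; exact filter_congr fun f _ => by simp
  rw [IsBalancedLevel, IsBalancedLevel, below, above, level, mul_right_comm]
  tauto

lemma exists_median (hA : A.Nonempty) :
    ∃ c, 2 * #{f ∈ A | c < v f} ≤ #A ∧ 2 * #{f ∈ A | v f < c} ≤ #A := by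
  have hbdd : ∃ b, ∀ z, #A ≤ 2 * #{f ∈ A | v f ≤ z} → b ≤ z := by
    refine ⟨(A.image v).min' (hA.image v), fun z hz => ?_⟩
    by_contra! hz_lt
    have : {f ∈ A | v f ≤ z} = ∅ := filter_eq_empty_iff.mpr fun f hf =>
      ((min'_le _ _ (mem_image_of_mem v hf)).trans_lt' hz_lt).not_ge
    simp [this, hA.ne_empty] at hz
  have hex : ∃ z, #A ≤ 2 * #{f ∈ A | v f ≤ z} := by
    refine ⟨(A.image v).max' (hA.image v), ?_⟩
    rw [filter_true_of_mem fun f hf => le_max' _ _ (mem_image_of_mem v hf)]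
    omega
  obtain ⟨c, hc, hleast⟩ := Int.exists_least_of_bdd hbdd hex
  refine ⟨c, ?_, ?_⟩
  · have := card_filter_add_card_filter_not (s := A) (fun f => v f ≤ c)
    simp only [not_le] at this
    omega
  · have hprev : {f ∈ A | v f < c} = {f ∈ A | v f ≤ c - 1} := filter_congr fun f _ => by omega
    have := hleast (c - 1)
    rw [hprev]
    omega

lemma two_mul_card_mul_card_lt_le_sq {h : ℤ} (hbal : ¬ IsBalancedLevel A v (h + 1))
    (hh : 2 * #{f ∈ A | h < v f} ≤ #A) :
    2 * #A * #{f ∈ A | h + 1 < v f} ≤ #{f ∈ A | h < v f} ^ 2 := by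
  set below := #{f ∈ A | v f < h + 1}
  set tail := #{f ∈ A | h < v f}
  have hsplit : below + tail = #A := by
    have hcompl : {f ∈ A | ¬ v f < h + 1} = {f ∈ A | h < v f} := filter_congr fun f _ => by omega
    simp only [below, tail, ← hcompl]
    exact card_filter_add_card_filter_not _
  have hlevel : #{f ∈ A | v f = h + 1} ≤ tail :=
    card_le_card (monotone_filter_right _ fun f _ hf => by omega)
  rcases Nat.eq_zero_or_pos #{f ∈ A | h + 1 < v f} with h0 | hpos
  · simp [h0]
  have hA : #{f ∈ A | h + 1 < v f} ≤ #A := card_filter_le _ _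
  simp only [IsBalancedLevel, not_and, not_le] at hbal
  calc 2 * #A * #{f ∈ A | h + 1 < v f} ≤ 4 * below * #{f ∈ A | h + 1 < v f} := by
        exact Nat.mul_le_mul_right _ (by omega)
    _ ≤ #{f ∈ A | v f = h + 1} ^ 2 := (hbal (by omega) hpos).le
    _ ≤ tail ^ 2 := by gcongr

lemma card_tail_mul_four_pow_le (hbal : ∀ h, ¬ IsBalancedLevel A v h) {c : ℤ}
    (hc : 2 * #{f ∈ A | c < v f} ≤ #A) (k : ℕ) :
    #{f ∈ A | c + k < v f} * 4 ^ (k + 1) ≤ 2 * #A := by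
  induction k with
  | zero => simp only [CharP.cast_eq_zero, add_zero]; omega
  | succ k ih =>
    set t := #{f ∈ A | c + k < v f}
    have ht : 2 * t ≤ #A := by
      have : 4 ≤ 4 ^ (k + 1) := Nat.le_self_pow (by omega) 4
      nlinarith
    have hstep := two_mul_card_mul_card_lt_le_sq A v (hbal _) ht
    rw [Nat.cast_succ, ← add_assoc]
    rcases Nat.eq_zero_or_pos #A with hn | hn
    · simp [card_eq_zero.mp hn]
    refine Nat.le_of_mul_le_mul_left ?_ (by positivity : 0 < 2 * #A)
    calc 2 * #A * (#{f ∈ A | c + k + 1 < v f} * 4 ^ (k + 1 + 1))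
        = 2 * #A * #{f ∈ A | c + k + 1 < v f} * 4 ^ (k + 2) := by ring
      _ ≤ t ^ 2 * 4 ^ (k + 2) := by gcongr
      _ ≤ t ^ 2 * 4 ^ ((k + 1) * 2) := by gcongr <;> omega
      _ = (t * 4 ^ (k + 1)) ^ 2 := by ring
      _ ≤ (2 * #A) ^ 2 := by gcongr
      _ = 2 * #A * (2 * #A) := sq _

lemma card_filter_lt_add_card_filter_eq_add_card_filter_gt (h : ℤ) :
    #{f ∈ A | v f < h} + #{f ∈ A | v f = h} + #{f ∈ A | h < v f} = #A := by
  classical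
  rw [← card_union_of_disjoint (disjoint_filter.mpr fun _ _ hlt heq => by omega), ← filter_or,
    ← card_union_of_disjoint (disjoint_filter.mpr fun _ _ hle hgt => by omega), ← filter_or,
    filter_true_of_mem fun f _ => by omega]

lemma sum_sq_sub_le_of_card_tail_le {c : ℤ}
    (hup : ∀ k : ℕ, #{f ∈ A | c + k < v f} * 4 ^ (k + 1) ≤ 2 * #A)
    (hdown : ∀ k : ℕ, #{f ∈ A | v f < c - k} * 4 ^ (k + 1) ≤ 2 * #A) :
    ∑ f ∈ A, ((v f : ℝ) - c) ^ 2 ≤ 4 * #A := by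
  set d : α → ℕ := fun f => (v f - c).natAbs
  have hsq : ∀ f ∈ A, ((v f : ℝ) - c) ^ 2 =
      ∑ k ∈ range (A.sup d), if k < d f then (2 * k + 1 : ℝ) else 0 := by
    intro f hf
    rw [← sq_eq_sum_range_ite_odd (le_sup hf), Nat.cast_natAbs, Int.cast_abs, sq_abs]
    push_cast; ring
  have htail : ∀ k, #{f ∈ A | k < d f} * 4 ^ k ≤ #A := fun k => by
    classical
    have hsub : {f ∈ A | k < d f} ⊆ {f ∈ A | c + k < v f} ∪ {f ∈ A | v f < c - k} := by
      intro f hf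
      simp only [mem_filter, d] at hf
      rw [mem_union, mem_filter, mem_filter]
      by_cases hup : c + k < v f
      · exact Or.inl ⟨hf.1, hup⟩
      · exact Or.inr ⟨hf.1, by omega⟩
    have hcard := Nat.mul_le_mul_right (4 ^ k) ((card_le_card hsub).trans (card_union_le _ _))
    have hup_k := hup k
    have hdown_k := hdown k
    rw [pow_succ] at hup_k hdown_k
    linarith
  calc ∑ f ∈ A, ((v f : ℝ) - c) ^ 2
      = ∑ k ∈ range (A.sup d), (2 * k + 1 : ℝ) * #{f ∈ A | k < d f} := by
        rw [sum_congr rfl hsq, sum_comm]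
        refine sum_congr rfl fun k _ => ?_
        rw [← sum_filter, sum_const, nsmul_eq_mul, mul_comm]
    _ ≤ 4 * #A := sum_odd_mul_le htail

lemma exists_isBalancedLevel
    (hspread : ∀ c : ℤ, (4 * #A : ℝ) < ∑ f ∈ A, ((v f : ℝ) - c) ^ 2) :
    ∃ h, IsBalancedLevel A v h := by
  by_contra! hbal
  have hA : A.Nonempty := nonempty_iff_ne_empty.mpr fun hA => by simpa [hA] using hspread 0
  obtain ⟨c, hup, hdown⟩ := exists_median A v hA
  have hbal_neg : ∀ h, ¬ IsBalancedLevel A (-v) h := fun h => by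
    rw [← neg_neg h, isBalancedLevel_neg_iff]
    exact hbal _
  have hdown_neg : 2 * #{f ∈ A | -c < (-v) f} ≤ #A := by
    convert hdown using 4
    simp
  refine (hspread c).not_ge (sum_sq_sub_le_of_card_tail_le A v
    (card_tail_mul_four_pow_le A v hbal hup) fun k => ?_)
  convert card_tail_mul_four_pow_le A (-v) hbal_neg hdown_neg k using 4
  simp only [Pi.neg_apply]
  omega

end BalancedLevel

lemma sum_sum_sq_sub_le {α : Type*} (A : Finset α) (x : α → ℝ) (c : ℝ) :
    ∑ f ∈ A, ∑ g ∈ A, (x f - x g) ^ 2 ≤ 4 * #A * ∑ f ∈ A, (x f - c) ^ 2 := by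
  calc ∑ f ∈ A, ∑ g ∈ A, (x f - x g) ^ 2
      ≤ ∑ f ∈ A, ∑ g ∈ A, (2 * (x f - c) ^ 2 + 2 * (x g - c) ^ 2) := by
        gcongr with f _ g _
        nlinarith [sq_nonneg (x f + x g - 2 * c)]
    _ = 4 * #A * ∑ f ∈ A, (x f - c) ^ 2 := by
        simp only [sum_add_distrib, sum_const, nsmul_eq_mul, ← mul_sum]; ring

lemma four_mul_card_lt_sum_sq_sub {α : Type*} {A : Finset α} (hA : 2 ≤ #A) {x : α → ℝ}
    (hx : 36 * #A * (#A - 1 : ℝ) ≤ ∑ f ∈ A, ∑ g ∈ A, (x f - x g) ^ 2) (c : ℝ) :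
    4 * #A < ∑ f ∈ A, (x f - c) ^ 2 := by
  have := sum_sum_sq_sub_le A x c
  have hn : (2 : ℝ) ≤ #A := by exact_mod_cast hA
  nlinarith

lemma exists_sum_sum_sq_sub_ge [MeasurableSpace Ω] (μ : Measure Ω) [IsProbabilityMeasure μ]
    (A : Finset (Ω → ℤ)) (hmem : ∀ f ∈ A, MemLp (fun ω => (f ω : ℝ)) 2 μ)
    (hsep : ∀ f ∈ A, ∀ g ∈ A, f ≠ g → ∫ ω, ((f ω : ℝ) - (g ω : ℝ)) ^ 2 ∂μ ≥ 36) :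
    ∃ ω, 36 * #A * (#A - 1 : ℝ) ≤ ∑ f ∈ A, ∑ g ∈ A, ((f ω : ℝ) - g ω) ^ 2 := by
  have hint : ∀ f ∈ A, ∀ g ∈ A, Integrable (fun ω => ((f ω : ℝ) - g ω) ^ 2) μ :=
    fun f hf g hg => ((hmem f hf).sub (hmem g hg)).integrable_sq
  have hrow : ∀ f ∈ A, 36 * (#A - 1 : ℝ) ≤ ∑ g ∈ A, ∫ ω, ((f ω : ℝ) - g ω) ^ 2 ∂μ := by
    classical
    intro f hf
    have := card_nsmul_le_sum (A.erase f) _ 36 fun g hg =>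
      hsep f hf g (mem_of_mem_erase hg) (ne_of_mem_erase hg).symm
    rw [card_erase_of_mem hf, nsmul_eq_mul, Nat.cast_pred (card_pos.mpr ⟨f, hf⟩)] at this
    rw [← add_sum_erase A _ hf]
    simp only [sub_self, ne_eq, OfNat.ofNat_ne_zero, not_false_eq_true, zero_pow, integral_zero,
      zero_add]
    linarith
  have hF := integrable_finsetSum A fun f hf => integrable_finsetSum A (hint f hf)
  obtain ⟨ω, hω⟩ := exists_integral_le hF
  refine ⟨ω, le_trans ?_ hω⟩
  rw [integral_finsetSum A fun f hf => integrable_finsetSum A (hint f hf)]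
  calc 36 * #A * (#A - 1 : ℝ) = ∑ f ∈ A, 36 * (#A - 1 : ℝ) := by
        rw [sum_const, nsmul_eq_mul]; ring
    _ ≤ _ := sum_le_sum fun f hf => (hrow f hf).trans_eq (integral_finsetSum A (hint f hf)).symm

section Centers

variable {A B : Finset (Ω → ℤ)} {σ : Finset Ω} {h : Ω → ℤ} {ω₀ : Ω} {h₀ : ℤ}
  {p : Finset Ω × (Ω → ℤ)}

lemma ShattersCenter.exists_lt (hA : ShattersCenter A σ h) {i : Ω} (hi : i ∈ σ) :
    ∃ f ∈ A, f i < h i := by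
  obtain ⟨f, hf, hθ⟩ := hA.2 fun _ => false
  exact ⟨f, hf, (hθ i hi).2 rfl⟩

lemma ShattersCenter.exists_gt (hA : ShattersCenter A σ h) {i : Ω} (hi : i ∈ σ) :
    ∃ f ∈ A, h i < f i := by
  obtain ⟨f, hf, hθ⟩ := hA.2 fun _ => true
  exact ⟨f, hf, (hθ i hi).1 rfl⟩

lemma ShattersCenter.mono (hB : ShattersCenter B σ h) (hBA : B ⊆ A) : ShattersCenter A σ h :=
  ⟨hB.1.mono hBA, fun θ => (hB.2 θ).imp fun _ ⟨hf, hθ⟩ => ⟨hBA hf, hθ⟩⟩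

lemma shatteredCenters_mono (hBA : B ⊆ A) : shatteredCenters B ⊆ shatteredCenters A :=
  fun _ ⟨hsupp, hB⟩ => ⟨hsupp, hB.mono hBA⟩

lemma empty_zero_mem_shatteredCenters (hA : A.Nonempty) :
    ((∅ : Finset Ω), (0 : Ω → ℤ)) ∈ shatteredCenters A :=
  ⟨fun _ _ => rfl, hA, fun _ => ⟨hA.choose, hA.choose_spec, by simp⟩⟩

lemma notMem_of_mem_shatteredCenters_filter (hup : p ∈ shatteredCenters {f ∈ A | h₀ < f ω₀})
    (hdown : p ∈ shatteredCenters {f ∈ A | f ω₀ < h₀}) : ω₀ ∉ p.1 := fun hω₀ => by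
  obtain ⟨f, hf, hf_lt⟩ := hup.2.exists_lt hω₀
  obtain ⟨g, hg, hg_gt⟩ := hdown.2.exists_gt hω₀
  have := (mem_filter.mp hf).2
  have := (mem_filter.mp hg).2
  omega

variable [DecidableEq Ω]

def extendCenter (ω₀ : Ω) (h₀ : ℤ) (p : Finset Ω × (Ω → ℤ)) : Finset Ω × (Ω → ℤ) :=
  (insert ω₀ p.1, Function.update p.2 ω₀ h₀)

lemma ShattersCenter.insert_update (hω₀ : ω₀ ∉ σ) (hup : ShattersCenter {f ∈ A | h₀ < f ω₀} σ h)
    (hdown : ShattersCenter {f ∈ A | f ω₀ < h₀} σ h) :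
    ShattersCenter A (insert ω₀ σ) (Function.update h ω₀ h₀) := by
  refine ⟨hup.1.mono (filter_subset _ _), fun θ => ?_⟩
  have hextend : ∀ f ∈ A, (∀ i ∈ σ, (θ i = true → f i > h i) ∧ (θ i = false → f i < h i)) →
      (θ ω₀ = true → f ω₀ > h₀) ∧ (θ ω₀ = false → f ω₀ < h₀) →
      ∃ f ∈ A, ∀ i ∈ insert ω₀ σ, (θ i = true → f i > Function.update h ω₀ h₀ i) ∧
        (θ i = false → f i < Function.update h ω₀ h₀ i) := by
    intro f hf hσ hω
    refine ⟨f, hf, forall_mem_insert _ _ _ |>.mpr ⟨by simpa using hω, fun i hi => ?_⟩⟩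
    rw [Function.update_of_ne (ne_of_mem_of_not_mem hi hω₀)]
    exact hσ i hi
  cases hθ : θ ω₀
  · obtain ⟨f, hf, hσ⟩ := hdown.2 θ
    rw [mem_filter] at hf
    exact hextend f hf.1 hσ ⟨fun hθ' => by simp [hθ] at hθ', fun _ => hf.2⟩
  · obtain ⟨f, hf, hσ⟩ := hup.2 θ
    rw [mem_filter] at hf
    exact hextend f hf.1 hσ ⟨fun _ => hf.2, fun hθ' => by simp [hθ] at hθ'⟩

lemma extendCenter_mem_shatteredCenters (hup : p ∈ shatteredCenters {f ∈ A | h₀ < f ω₀})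
    (hdown : p ∈ shatteredCenters {f ∈ A | f ω₀ < h₀}) :
    extendCenter ω₀ h₀ p ∈ shatteredCenters A := by
  have hω₀ := notMem_of_mem_shatteredCenters_filter hup hdown
  refine ⟨fun i hi => ?_, hup.2.insert_update hω₀ hdown.2⟩
  rw [extendCenter, mem_insert, not_or] at hi
  change Function.update p.2 ω₀ h₀ i = 0
  rw [Function.update_of_ne hi.1]
  exact hup.1 i hi.2

lemma extendCenter_notMem_shatteredCenters_filter_lt :
    extendCenter ω₀ h₀ p ∉ shatteredCenters {f ∈ A | h₀ < f ω₀} := fun hext => by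
  obtain ⟨f, hf, hf_lt⟩ := hext.2.exists_lt (mem_insert_self ω₀ p.1)
  have := (mem_filter.mp hf).2
  simp only [extendCenter, Function.update_self] at hf_lt
  omega

lemma extendCenter_notMem_shatteredCenters_filter_gt :
    extendCenter ω₀ h₀ p ∉ shatteredCenters {f ∈ A | f ω₀ < h₀} := fun hext => by
  obtain ⟨f, hf, hf_gt⟩ := hext.2.exists_gt (mem_insert_self ω₀ p.1)
  have := (mem_filter.mp hf).2
  simp only [extendCenter, Function.update_self] at hf_gt
  omega

lemma extendCenter_injOn :
    Set.InjOn (extendCenter ω₀ h₀) {p | ω₀ ∉ p.1 ∧ p.2 ω₀ = 0} := by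
  rintro ⟨σ, h⟩ ⟨hσ, hh⟩ ⟨τ, k⟩ ⟨hτ, hk⟩ heq
  simp only [extendCenter, Prod.mk.injEq] at heq
  refine Prod.ext ?_ ?_
  · simpa [erase_insert hσ, erase_insert hτ] using congrArg (erase · ω₀) heq.1
  · funext i
    by_cases hi : i = ω₀
    · subst hi; exact hh.trans hk.symm
    · simpa [Function.update_of_ne hi] using congrFun heq.2 i

lemma exists_subset_shatteredCenters_card_eq_add {S T : Finset (Finset Ω × (Ω → ℤ))}
    (hS : ↑S ⊆ shatteredCenters {f ∈ A | h₀ < f ω₀})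
    (hT : ↑T ⊆ shatteredCenters {f ∈ A | f ω₀ < h₀}) :
    ∃ R : Finset (Finset Ω × (Ω → ℤ)), ↑R ⊆ shatteredCenters A ∧ #R = #S + #T := by
  classical
  have hST : ∀ p ∈ S ∩ T, p ∈ shatteredCenters {f ∈ A | h₀ < f ω₀} ∧
      p ∈ shatteredCenters {f ∈ A | f ω₀ < h₀} := fun p hp =>
    ⟨hS (mem_inter.mp hp).1, hT (mem_inter.mp hp).2⟩
  have hdisj : Disjoint (S ∪ T) ((S ∩ T).image (extendCenter ω₀ h₀)) := by
    rw [disjoint_right]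
    rintro _ hq hq'
    obtain ⟨p, -, rfl⟩ := mem_image.mp hq
    rcases mem_union.mp hq' with hqS | hqT
    · exact extendCenter_notMem_shatteredCenters_filter_lt (hS hqS)
    · exact extendCenter_notMem_shatteredCenters_filter_gt (hT hqT)
  have hinj : Set.InjOn (extendCenter ω₀ h₀) ↑(S ∩ T) := by
    refine extendCenter_injOn.mono fun p hp => ?_
    have hω₀ := notMem_of_mem_shatteredCenters_filter (hST p hp).1 (hST p hp).2
    exact ⟨hω₀, (hST p hp).1.1 ω₀ hω₀⟩
  refine ⟨S ∪ T ∪ (S ∩ T).image (extendCenter ω₀ h₀), ?_, ?_⟩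
  · simp only [coe_union, coe_image, Set.union_subset_iff, Set.image_subset_iff]
    refine ⟨⟨hS.trans (shatteredCenters_mono (filter_subset _ _)),
      hT.trans (shatteredCenters_mono (filter_subset _ _))⟩, fun p hp => ?_⟩
    exact extendCenter_mem_shatteredCenters (hST p hp).1 (hST p hp).2
  · rw [card_union_of_disjoint hdisj, card_image_of_injOn hinj, card_union_add_card_inter]

end Centers

lemma add_add_le_add_sq {a l b x y : ℕ} (ha : a ≤ x ^ 2) (hb : b ≤ y ^ 2) (hl : l ^ 2 ≤ 4 * a * b) :
    a + l + b ≤ (x + y) ^ 2 := by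
  have : l ≤ 2 * x * y := by
    refine (Nat.pow_le_pow_iff_left two_ne_zero).mp (hl.trans ?_)
    calc 4 * a * b ≤ 4 * x ^ 2 * y ^ 2 := by gcongr
      _ = (2 * x * y) ^ 2 := by ring
  nlinarith

lemma exists_subset_shatteredCenters_card_le_sq [MeasurableSpace Ω] (μ : Measure Ω)
    [IsProbabilityMeasure μ] (A : Finset (Ω → ℤ))
    (hmem : ∀ f ∈ A, MemLp (fun ω => (f ω : ℝ)) 2 μ)
    (hsep : ∀ f ∈ A, ∀ g ∈ A, f ≠ g → ∫ ω, ((f ω : ℝ) - (g ω : ℝ)) ^ 2 ∂μ ≥ 36) :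
    ∃ S : Finset (Finset Ω × (Ω → ℤ)), ↑S ⊆ shatteredCenters A ∧ #A ≤ #S ^ 2 := by
  classical
  induction A using Finset.strongInduction with
  | H A ih =>
  rcases lt_or_ge #A 2 with hsmall | hA
  · rcases A.eq_empty_or_nonempty with rfl | hne
    · exact ⟨∅, by simp, by simp⟩
    · exact ⟨{(∅, 0)}, by simpa using empty_zero_mem_shatteredCenters hne, by simp; omega⟩
  obtain ⟨ω₀, hω₀⟩ := exists_sum_sum_sq_sub_ge μ A hmem hsep
  obtain ⟨h₀, hbelow, habove, hlevel⟩ :=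
    exists_isBalancedLevel A (fun f => f ω₀) fun c => four_mul_card_lt_sum_sq_sub hA hω₀ c
  have ih_filter : ∀ p : (Ω → ℤ) → Prop, [DecidablePred p] → (∃ f ∈ A, ¬ p f) →
      ∃ S : Finset (Finset Ω × (Ω → ℤ)), ↑S ⊆ shatteredCenters {f ∈ A | p f} ∧
        #{f ∈ A | p f} ≤ #S ^ 2 := fun p _ hp =>
    ih _ (filter_ssubset.mpr hp) (fun f hf => hmem f (filter_subset _ _ hf))
      fun f hf g hg => hsep f (filter_subset _ _ hf) g (filter_subset _ _ hg)
  obtain ⟨f₁, hf₁⟩ := card_pos.mp hbelow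
  obtain ⟨f₂, hf₂⟩ := card_pos.mp habove
  rw [mem_filter] at hf₁ hf₂
  obtain ⟨S, hS, hScard⟩ := ih_filter (h₀ < · ω₀) ⟨f₁, hf₁.1, lt_asymm hf₁.2⟩
  obtain ⟨T, hT, hTcard⟩ := ih_filter (· ω₀ < h₀) ⟨f₂, hf₂.1, lt_asymm hf₂.2⟩
  obtain ⟨R, hR, hRcard⟩ := exists_subset_shatteredCenters_card_eq_add hS hT
  refine ⟨R, hR, ?_⟩
  rw [hRcard, add_comm, ← card_filter_lt_add_card_filter_eq_add_card_filter_gt A (· ω₀) h₀]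
  exact add_add_le_add_sq hTcard hScard hlevel

theorem stmt_9_general [MeasurableSpace Ω] (μ : Measure Ω) [IsProbabilityMeasure μ]
    (A : Finset (Ω → ℤ))
    (hmem : ∀ f ∈ A, MemLp (fun ω => (f ω : ℝ)) 2 μ)
    (hsep : ∀ f ∈ A, ∀ g ∈ A, f ≠ g → ∫ ω, ((f ω : ℝ) - (g ω : ℝ)) ^ 2 ∂μ ≥ 36) :
    (⌈Real.sqrt A.card⌉₊ : ℕ∞) ≤ (shatteredCenters A).encard := by
  obtain ⟨S, hS, hcard⟩ := exists_subset_shatteredCenters_card_le_sq μ A hmem hsep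
  have hceil : ⌈Real.sqrt #A⌉₊ ≤ #S :=
    Nat.ceil_le.mpr (Real.sqrt_le_iff.mpr ⟨by positivity, by exact_mod_cast hcard⟩)
  calc (⌈Real.sqrt A.card⌉₊ : ℕ∞) ≤ #S := by exact_mod_cast hceil
    _ = (S : Set (Finset Ω × (Ω → ℤ))).encard := (Set.encard_coe_eq_coe_finsetCard S).symm
    _ ≤ (shatteredCenters A).encard := Set.encard_le_encard hS

theorem stmt_9 [MeasurableSpace Ω] (μ : Measure Ω) [IsProbabilityMeasure μ]
    (A : Finset (Ω → ℤ)) (hA : 2 ≤ A.card)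
    (hmem : ∀ f ∈ A, MemLp (fun ω => (f ω : ℝ)) 2 μ)
    (hsep : ∀ f ∈ A, ∀ g ∈ A, f ≠ g → ∫ ω, ((f ω : ℝ) - (g ω : ℝ)) ^ 2 ∂μ ≥ 36) :
    (⌈Real.sqrt A.card⌉₊ : ℕ∞) ≤ (shatteredCenters A).encard :=
  stmt_9_general μ A hmem hsep
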